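/- arXiv:1809.00377 — 10 statements merged into one kernel-verified Lean document; each statement's English description precedes it below -/
import Mathlib

section
/- If M is an integrable mean function and 0 < a < b, then J_M(a,b) := 3·I_M(a,b) − (a+b) satisfies a ≤ J_M(a,b) ≤ b, where I_M(a,b) = (1/(b−a)²)·∫ₐᵇ∫ₐᵇ M(x,y) dx dy. -/
/-! Since `min ≤ M ≤ max` pointwise, `I_M(a, b)` lies between `I_min(a, b) = (2a + b)/3` and
`I_max(a, b) = (a + 2b)/3`, computed by splitting the inner integral at the diagonal; these are
exactly the values for which `J` equals `a` and `b`. -/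

open MeasureTheory intervalIntegral

lemma integral_min_left {a b x : ℝ} (hax : a ≤ x) (hxb : x ≤ b) :
    ∫ y in a..b, min x y = b * x - x ^ 2 / 2 - a ^ 2 / 2 := by
  have hcont : Continuous fun y : ℝ => min x y := by fun_prop
  rw [← integral_add_adjacent_intervals (hcont.intervalIntegrable a x)
    (hcont.intervalIntegrable x b),
    integral_congr (f := fun y => min x y) (g := fun y => y)
      fun y hy => min_eq_right (Set.uIcc_of_le hax ▸ hy).2,
    integral_congr (f := fun y => min x y) (g := fun _ => x)
      fun y hy => min_eq_left (Set.uIcc_of_le hxb ▸ hy).1]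
  simp only [integral_id, intervalIntegral.integral_const, smul_eq_mul]
  ring

lemma integral_max_left {a b x : ℝ} (hax : a ≤ x) (hxb : x ≤ b) :
    ∫ y in a..b, max x y = x ^ 2 / 2 - a * x + b ^ 2 / 2 := by
  have hcont : Continuous fun y : ℝ => max x y := by fun_prop
  rw [← integral_add_adjacent_intervals (hcont.intervalIntegrable a x)
    (hcont.intervalIntegrable x b),
    integral_congr (f := fun y => max x y) (g := fun _ => x)
      fun y hy => max_eq_left (Set.uIcc_of_le hax ▸ hy).2,
    integral_congr (f := fun y => max x y) (g := fun y => y)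
      fun y hy => max_eq_right (Set.uIcc_of_le hxb ▸ hy).1]
  simp only [integral_id, intervalIntegral.integral_const, smul_eq_mul]
  ring

lemma integral_integral_min {a b : ℝ} (hab : a ≤ b) :
    ∫ x in a..b, ∫ y in a..b, min x y = (b - a) ^ 2 * (2 * a + b) / 3 := by
  rw [integral_congr (g := fun x => b * x - x ^ 2 / 2 - a ^ 2 / 2)
    fun x hx => integral_min_left (Set.uIcc_of_le hab ▸ hx).1 (Set.uIcc_of_le hab ▸ hx).2]
  -- `integral_const_mul` is instantiated by hand: simp does not solve `?f x =?= x`.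
  simp (disch := exact Continuous.intervalIntegrable (by fun_prop) _ _) only
    [intervalIntegral.integral_sub, intervalIntegral.integral_const_mul b (fun x => x),
     intervalIntegral.integral_div, integral_pow, integral_id, intervalIntegral.integral_const,
     smul_eq_mul]
  ring

lemma integral_integral_max {a b : ℝ} (hab : a ≤ b) :
    ∫ x in a..b, ∫ y in a..b, max x y = (b - a) ^ 2 * (a + 2 * b) / 3 := by
  rw [integral_congr (g := fun x => x ^ 2 / 2 - a * x + b ^ 2 / 2)
    fun x hx => integral_max_left (Set.uIcc_of_le hab ▸ hx).1 (Set.uIcc_of_le hab ▸ hx).2]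
  simp (disch := exact Continuous.intervalIntegrable (by fun_prop) _ _) only
    [intervalIntegral.integral_add, intervalIntegral.integral_sub,
     intervalIntegral.integral_const_mul a (fun x => x),
     intervalIntegral.integral_div, integral_pow, integral_id, intervalIntegral.integral_const,
     smul_eq_mul]
  ring

lemma integral_integral_mono_on {f g : ℝ → ℝ → ℝ} {a b : ℝ} (hab : a ≤ b)
    (hf : ∀ x ∈ Set.Icc a b, IntervalIntegrable (f x) volume a b)
    (hg : ∀ x ∈ Set.Icc a b, IntervalIntegrable (g x) volume a b)
    (hF : IntervalIntegrable (fun x => ∫ y in a..b, f x y) volume a b)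
    (hG : IntervalIntegrable (fun x => ∫ y in a..b, g x y) volume a b)
    (hfg : ∀ x ∈ Set.Icc a b, ∀ y ∈ Set.Icc a b, f x y ≤ g x y) :
    ∫ x in a..b, ∫ y in a..b, f x y ≤ ∫ x in a..b, ∫ y in a..b, g x y :=
  integral_mono_on hab hF hG fun x hx => integral_mono_on hab (hf x hx) (hg x hx) (hfg x hx)

theorem J_mean_is_mean_general (M : ℝ → ℝ → ℝ)
    (hMmean : ∀ x y : ℝ, 0 < x → 0 < y → min x y ≤ M x y ∧ M x y ≤ max x y)
    (a b : ℝ) (ha : 0 < a) (hab : a < b)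
    (hint' : ∀ x : ℝ, x ∈ Set.Icc a b → IntervalIntegrable (fun y => M x y) volume a b)
    (hint'' : IntervalIntegrable (fun x => ∫ y in a..b, M x y) volume a b) :
    a ≤ 3 * ((1 / (b - a)^2) * ∫ x in a..b, ∫ y in a..b, M x y) - (a + b) ∧
    3 * ((1 / (b - a)^2) * ∫ x in a..b, ∫ y in a..b, M x y) - (a + b) ≤ b := by
  have hpos : ∀ x ∈ Set.Icc a b, 0 < x := fun x hx => ha.trans_le hx.1
  have hmin := integral_integral_mono_on (f := fun x y => min x y) hab.le
    (fun x _ => Continuous.intervalIntegrable (by fun_prop) a b) hint'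
    (Continuous.intervalIntegrable (by fun_prop) a b) hint''
    fun x hx y hy => (hMmean x y (hpos x hx) (hpos y hy)).1
  have hmax := integral_integral_mono_on (g := fun x y => max x y) hab.le hint'
    (fun x _ => Continuous.intervalIntegrable (by fun_prop) a b) hint''
    (Continuous.intervalIntegrable (by fun_prop) a b)
    fun x hx y hy => (hMmean x y (hpos x hx) (hpos y hy)).2
  rw [integral_integral_min hab.le] at hmin
  rw [integral_integral_max hab.le] at hmax
  set D := ∫ x in a..b, ∫ y in a..b, M x y
  have hsq : 0 < (b - a) ^ 2 := pow_pos (sub_pos.2 hab) 2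
  rw [one_div_mul_eq_div]
  constructor
  · have := (le_div_iff₀ hsq).2 (by linarith : (2 * a + b) / 3 * (b - a) ^ 2 ≤ D)
    linarith
  · have := (div_le_iff₀ hsq).2 (by linarith : D ≤ (a + 2 * b) / 3 * (b - a) ^ 2)
    linarith

theorem J_mean_is_mean (M : ℝ → ℝ → ℝ)
    (hMmean : ∀ x y : ℝ, 0 < x → 0 < y → min x y ≤ M x y ∧ M x y ≤ max x y)
    (hMsymm : ∀ x y : ℝ, 0 < x → 0 < y → M x y = M y x)
    (a b : ℝ) (ha : 0 < a) (hab : a < b)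
    (hint : IntegrableOn (fun p : ℝ × ℝ => M p.1 p.2)
      (Set.Icc a b ×ˢ Set.Icc a b) volume)
    (hint' : ∀ x : ℝ, x ∈ Set.Icc a b → IntervalIntegrable (fun y => M x y) volume a b)
    (hint'' : IntervalIntegrable (fun x => ∫ y in a..b, M x y) volume a b) :
    a ≤ 3 * ((1 / (b - a)^2) * ∫ x in a..b, ∫ y in a..b, M x y) - (a + b) ∧
    3 * ((1 / (b - a)^2) * ∫ x in a..b, ∫ y in a..b, M x y) - (a + b) ≤ b :=
  J_mean_is_mean_general M hMmean a b ha hab hint' hint''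
end

section
/- For 0 < a < b, (2/(b−a)²)·∫ₐᵇ∫ₐᵇ (xy/(x+y)) dx dy = (4/3)·(2A + (1/(b−a)²)·(a³·ln(A/a) + b³·ln(A/b))), where A = (a+b)/2. -/
/-!
The function `Φ x y = (x + y)³ / 9 - (x³ + y³) / 3 · log (x + y)` satisfies
`∂ₓ∂ᵧ Φ = xy / (x + y)`, so the double integral over `[a, b]²` is
`Φ b b - Φ a b - Φ b a + Φ a a = Φ a a + Φ b b - 2 Φ a b`.
The cubic parts combine to `(2/3)(a + b)(b - a)²` and the logarithmic parts to
`(2/3)(a³ log (A / a) + b³ log (A / b))`.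
-/

open intervalIntegral Real Set MeasureTheory

theorem integral_integral_eq_of_hasDerivAt {f g Φ : ℝ → ℝ → ℝ} {a b c d : ℝ}
    (hg : ∀ x ∈ uIcc a b, ∀ y ∈ uIcc c d, HasDerivAt (g x) (f x y) y)
    (hΦ : ∀ x ∈ uIcc a b, ∀ y ∈ uIcc c d, HasDerivAt (Φ · y) (g x y) x)
    (hf : ∀ x ∈ uIcc a b, IntervalIntegrable (f x) volume c d)
    (hgc : IntervalIntegrable (g · c) volume a b) (hgd : IntervalIntegrable (g · d) volume a b) :
    ∫ x in a..b, ∫ y in c..d, f x y = Φ b d - Φ a d - (Φ b c - Φ a c) := by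
  rw [integral_congr fun x hx => integral_eq_sub_of_hasDerivAt (hg x hx) (hf x hx),
    integral_sub hgd hgc,
    integral_eq_sub_of_hasDerivAt (fun x hx => hΦ x hx d right_mem_uIcc) hgd,
    integral_eq_sub_of_hasDerivAt (fun x hx => hΦ x hx c left_mem_uIcc) hgc]

noncomputable def harmonicPotential (x y : ℝ) : ℝ :=
  (x + y) ^ 3 / 9 - (x ^ 3 + y ^ 3) / 3 * log (x + y)

theorem hasDerivAt_harmonicPotential {x y : ℝ} (hxy : x + y ≠ 0) :
    HasDerivAt (harmonicPotential · y) (x * y - x ^ 2 * log (x + y)) x := by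
  have hsum : HasDerivAt (· + y) 1 x := (hasDerivAt_id' x).add_const y
  have := ((hsum.pow 3).div_const 9).sub
    ((((hasDerivAt_pow 3 x).add_const (y ^ 3)).div_const 3).mul (hsum.log hxy))
  refine this.congr_deriv ?_
  field_simp
  ring

theorem hasDerivAt_mul_sub_sq_mul_log {x y : ℝ} (hxy : x + y ≠ 0) :
    HasDerivAt (fun y => x * y - x ^ 2 * log (x + y)) (x * y / (x + y)) y := by
  have := ((hasDerivAt_id' y).const_mul x).sub
    ((((hasDerivAt_id' y).const_add x).log hxy).const_mul (x ^ 2))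
  refine this.congr_deriv ?_
  field_simp
  ring

theorem integral_integral_mul_div_add {a b : ℝ} (ha : 0 < a) (hb : 0 < b) :
    ∫ x in a..b, ∫ y in a..b, x * y / (x + y) =
      harmonicPotential a a + harmonicPotential b b - 2 * harmonicPotential a b := by
  have hpos : ∀ x ∈ uIcc a b, 0 < x := fun x hx => (lt_min ha hb).trans_le hx.1
  have hsum : ∀ x ∈ uIcc a b, ∀ y ∈ uIcc a b, x + y ≠ 0 := fun x hx y hy =>
    (add_pos (hpos x hx) (hpos y hy)).ne'
  have hg : ∀ y ∈ uIcc a b,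
      IntervalIntegrable (fun x => x * y - x ^ 2 * log (x + y)) volume a b :=
    fun y hy => ContinuousOn.intervalIntegrable <| by
      fun_prop (disch := exact fun x hx => hsum x hx y hy)
  rw [integral_integral_eq_of_hasDerivAt
    (fun x hx y hy => hasDerivAt_mul_sub_sq_mul_log (hsum x hx y hy))
    (fun x hx y hy => hasDerivAt_harmonicPotential (hsum x hx y hy))
    (fun x hx => ContinuousOn.intervalIntegrable <| by
      fun_prop (disch := exact fun y hy => hsum x hx y hy))
    (hg a left_mem_uIcc) (hg b right_mem_uIcc)]
  simp only [harmonicPotential, add_comm b a]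
  ring

theorem integral_harmonic_mean (a b : ℝ) (ha : 0 < a) (hab : a < b) :
    (2 / (b - a)^2) * (∫ x in a..b, ∫ y in a..b, x * y / (x + y)) =
      (4/3) * (2 * ((a + b) / 2) + (1 / (b - a)^2) *
        (a^3 * Real.log (((a + b) / 2) / a) + b^3 * Real.log (((a + b) / 2) / b))) := by
  have hb : 0 < b := ha.trans hab
  have hba : b - a ≠ 0 := sub_ne_zero.2 hab.ne'
  have hlog (c : ℝ) (hc : 0 < c) : log ((a + b) / 2 / c) = log (a + b) - log (c + c) := by
    rw [div_div, two_mul, log_div (by positivity) (by positivity)]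
  rw [integral_integral_mul_div_add ha hb, hlog a ha, hlog b hb]
  simp only [harmonicPotential]
  field_simp
  ring
end

section
/- For 0 < a < b, (8/9)·A(a,b) < (2(b^{3/2} − a^{3/2})/(3(b−a)))² < A(a,b), where A(a,b) = (a+b)/2; moreover 8/9 is the best (infimum) lower constant. -/
/-!
With `a = s²`, `b = t²` the integral geometric mean becomes `(2(s² + st + t²) / (3(s + t)))²`,
and both bounds reduce to polynomial identities with a manifestly positive right-hand side.
The constant `8/9` is the value at `a = 0` of the continuous function `I_G(a, 1) / A(a, 1)`,
so it is approached as `a → 0⁺`.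
-/

open Filter Topology

noncomputable def integralGeomMean (a b : ℝ) : ℝ :=
  (2 * (b ^ ((3:ℝ)/2) - a ^ ((3:ℝ)/2)) / (3 * (b - a))) ^ 2

lemma sq_rpow_three_halves {s : ℝ} (hs : 0 ≤ s) : (s ^ 2) ^ ((3:ℝ)/2) = s ^ 3 := by
  rw [← Real.rpow_natCast, ← Real.rpow_mul hs]
  norm_num

lemma integralGeomMean_sq_sq {s t : ℝ} (hs : 0 ≤ s) (hst : s < t) :
    integralGeomMean (s ^ 2) (t ^ 2) = (2 * (s ^ 2 + s * t + t ^ 2) / (3 * (s + t))) ^ 2 := by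
  have ht : 0 < t := hs.trans_lt hst
  have hts : t - s ≠ 0 := sub_ne_zero.mpr hst.ne'
  rw [integralGeomMean, sq_rpow_three_halves hs, sq_rpow_three_halves (hs.trans hst.le)]
  congr 1
  rw [div_eq_div_iff (by rw [show t ^ 2 - s ^ 2 = (t - s) * (s + t) by ring]; positivity)
    (by positivity)]
  ring

-- `(s² + st + t²)² - (s² + t²)(s + t)² = (st)²`
lemma eight_ninths_mul_lt_integralGeomMean_sq_sq {s t : ℝ} (hs : 0 < s) (hst : s < t) :
    8 / 9 * ((s ^ 2 + t ^ 2) / 2) < integralGeomMean (s ^ 2) (t ^ 2) := by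
  have ht : 0 < t := hs.trans hst
  rw [integralGeomMean_sq_sq hs.le hst, div_pow, lt_div_iff₀ (by positivity)]
  nlinarith [mul_pos (mul_pos hs ht) (mul_pos hs ht)]

-- `9 (s² + t²)(s + t)² - 8 (s² + st + t²)² = (s - t)² (s² + 4st + t²)`
lemma integralGeomMean_sq_sq_lt {s t : ℝ} (hs : 0 ≤ s) (hst : s < t) :
    integralGeomMean (s ^ 2) (t ^ 2) < (s ^ 2 + t ^ 2) / 2 := by
  have ht : 0 < t := hs.trans_lt hst
  have key : 0 < (s - t) ^ 2 * (s ^ 2 + 4 * s * t + t ^ 2) := by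
    have : s - t ≠ 0 := sub_ne_zero.mpr hst.ne
    positivity
  rw [integralGeomMean_sq_sq hs hst, div_pow, div_lt_iff₀ (by positivity)]
  nlinarith [key]

lemma integralGeomMean_mem_Ioo {a b : ℝ} (ha : 0 < a) (hab : a < b) :
    integralGeomMean a b ∈ Set.Ioo (8 / 9 * ((a + b) / 2)) ((a + b) / 2) := by
  obtain ⟨s, hs, rfl⟩ : ∃ s, 0 < s ∧ s ^ 2 = a := ⟨√a, by positivity, Real.sq_sqrt ha.le⟩
  obtain ⟨t, ht, rfl⟩ : ∃ t, 0 < t ∧ t ^ 2 = b :=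
    ⟨√b, Real.sqrt_pos.2 (ha.trans hab), Real.sq_sqrt (ha.trans hab).le⟩
  have hst : s < t := (pow_lt_pow_iff_left₀ hs.le ht.le two_ne_zero).1 hab
  exact ⟨eight_ninths_mul_lt_integralGeomMean_sq_sq hs hst, integralGeomMean_sq_sq_lt hs.le hst⟩

lemma tendsto_integralGeomMean_div_arithMean :
    Tendsto (fun a => integralGeomMean a 1 / ((a + 1) / 2)) (𝓝[>] 0) (𝓝 (8 / 9)) := by
  have hcont : ContinuousAt (fun a : ℝ => integralGeomMean a 1 / ((a + 1) / 2)) 0 := by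
    unfold integralGeomMean
    have : ContinuousAt (fun a : ℝ => a ^ ((3:ℝ)/2)) 0 :=
      Real.continuousAt_rpow_const _ _ (Or.inr (by norm_num))
    fun_prop (disch := norm_num)
  have h0 : integralGeomMean 0 1 / ((0 + 1) / 2) = 8 / 9 := by
    norm_num [integralGeomMean, Real.zero_rpow]
  rw [← h0]
  exact hcont.tendsto.mono_left nhdsWithin_le_nhds

theorem IG_bounds_best (a b : ℝ) (ha : 0 < a) (hab : a < b) :
    ((8/9) * ((a + b) / 2) < (2 * (b ^ ((3:ℝ)/2) - a ^ ((3:ℝ)/2)) / (3 * (b - a)))^2 ∧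
     (2 * (b ^ ((3:ℝ)/2) - a ^ ((3:ℝ)/2)) / (3 * (b - a)))^2 < (a + b) / 2) ∧
    ∀ ε : ℝ, 0 < ε → ∃ a' b' : ℝ, 0 < a' ∧ a' < b' ∧
      (2 * (b' ^ ((3:ℝ)/2) - a' ^ ((3:ℝ)/2)) / (3 * (b' - a')))^2 <
        (8/9 + ε) * ((a' + b') / 2) := by
  refine ⟨integralGeomMean_mem_Ioo ha hab, fun ε hε => ?_⟩
  have hratio : ∀ᶠ a' in 𝓝[>] (0:ℝ), integralGeomMean a' 1 / ((a' + 1) / 2) < 8 / 9 + ε :=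
    tendsto_integralGeomMean_div_arithMean.eventually (gt_mem_nhds (by linarith))
  obtain ⟨a', hlt, ha'⟩ := (hratio.and (Ioo_mem_nhdsGT one_pos)).exists
  refine ⟨a', 1, ha'.1, ha'.2, ?_⟩
  rwa [div_lt_iff₀ (by linarith [ha'.1])] at hlt
end

section
/- For t > 1, the function f(t) = 8(t²+t+1)²/(9(t²+1)(t+1)²) is strictly decreasing, and 8/9 < f(t) < 1. -/
/-!
With `s = t + t⁻¹`, which increases from `2` on `(1, ∞)`, the function is
`8/9 + 8 / (9 s (s + 2))`: it decreases, stays above `8/9`, and equals `1` at `s = 2`.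
-/

open Set

noncomputable def igRatio (t : ℝ) : ℝ :=
  8 * (t^2 + t + 1)^2 / (9 * (t^2 + 1) * (t + 1)^2)

lemma igRatio_eq_add_inv {t : ℝ} (ht : 0 < t) :
    igRatio t = 8/9 + 8 / (9 * ((t + t⁻¹) * (t + t⁻¹ + 2))) := by
  unfold igRatio
  field_simp
  ring

lemma strictMonoOn_add_inv : StrictMonoOn (fun t : ℝ => t + t⁻¹) (Ici 1) := by
  intro a ha b hb hab
  simp only [mem_Ici] at ha hb
  have hab1 : 1 < a * b := by nlinarith
  have key : b + b⁻¹ - (a + a⁻¹) = (b - a) * (a * b - 1) / (a * b) := by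
    field_simp
    ring
  have : 0 < (b - a) * (a * b - 1) / (a * b) := by
    apply div_pos (mul_pos _ _) <;> linarith
  linarith

lemma two_lt_add_inv {t : ℝ} (ht : 1 < t) : 2 < t + t⁻¹ := by
  simpa [one_add_one_eq_two] using
    strictMonoOn_add_inv self_mem_Ici (mem_Ici.2 ht.le) ht

lemma strictAntiOn_igRatio : StrictAntiOn igRatio (Ioi 1) := by
  intro a ha b hb hab
  simp only [mem_Ioi] at ha hb
  have hs := strictMonoOn_add_inv (mem_Ici.2 ha.le) (mem_Ici.2 hb.le) hab
  have ha2 := two_lt_add_inv ha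
  rw [igRatio_eq_add_inv (by linarith), igRatio_eq_add_inv (by linarith)]
  gcongr

lemma eight_ninths_lt_igRatio {t : ℝ} (ht : 0 < t) : 8/9 < igRatio t := by
  rw [igRatio_eq_add_inv ht]
  simp only [lt_add_iff_pos_right]
  positivity

lemma igRatio_lt_one {t : ℝ} (ht : 1 < t) : igRatio t < 1 := by
  have hs := two_lt_add_inv ht
  have h8 : 8 < (t + t⁻¹) * (t + t⁻¹ + 2) := by nlinarith
  rw [igRatio_eq_add_inv (by linarith)]
  have : 8 / (9 * ((t + t⁻¹) * (t + t⁻¹ + 2))) < 1/9 := by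
    rw [div_lt_iff₀ (by linarith)]
    linarith
  linarith

theorem f1_strict_anti_and_bounds :
    StrictAntiOn (fun t : ℝ => 8 * (t^2 + t + 1)^2 / (9 * (t^2 + 1) * (t + 1)^2))
      (Set.Ioi 1) ∧
    ∀ t : ℝ, 1 < t →
      8/9 < 8 * (t^2 + t + 1)^2 / (9 * (t^2 + 1) * (t + 1)^2) ∧
      8 * (t^2 + t + 1)^2 / (9 * (t^2 + 1) * (t + 1)^2) < 1 :=
  ⟨strictAntiOn_igRatio, fun _ ht =>
    ⟨eight_ninths_lt_igRatio (zero_lt_one.trans ht), igRatio_lt_one ht⟩⟩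
end

section
/- For t > 1, the function f₂(t) = (8/3)·(1 + ((t³+1)·ln((t+1)/2) − t³·ln t)/((t−1)²(t+1))) is strictly decreasing, with (8(1−ln 2))/3 < f₂(t) < 1. -/
/-!
Write `f₂ = 8/3 * (1 + N/D)` with `N t = (t³ + 1) log ((t + 1) / 2) - t³ log t` and
`D t = (t - 1)² (t + 1)`. Then `N'D - ND' = -(t - 1) H` with
`H t = (t + 1)³ ell t + (3t + 1) log t + D t`, and the two bounds say `8N + 5D < 0` and
`N + (log 2) D > 0` (`1` and `8(1 - log 2)/3` are the limits of `f₂` at `1` and at `∞`).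
Each of `H`, `-(8N + 5D)`, `N + (log 2) D` vanishes at `t = 1`; differentiating repeatedly, each
derivative again vanishing at `1`, one reaches a quantity whose sign follows from `log x < x - 1`,
from `log (1 + x) > 2x / (x + 2)`, or by inspection.
-/

open Real Set

lemma pos_of_hasDerivAt_pos {f f' : ℝ → ℝ} {a t : ℝ} (ht : a < t)
    (hf : ∀ x, a ≤ x → HasDerivAt f (f' x) x) (hf' : ∀ x, a < x → 0 < f' x) (ha : f a = 0) :
    0 < f t := by
  have hmono : StrictMonoOn f (Ici a) := strictMonoOn_of_hasDerivWithinAt_pos (convex_Ici a)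
    (fun x hx => (hf x hx).continuousAt.continuousWithinAt)
    (fun x hx => (hf x (interior_subset hx)).hasDerivWithinAt)
    (fun x hx => hf' x (by simpa using hx))
  simpa [ha] using hmono self_mem_Ici ht.le ht

/-- `ell t = log ((t + 1) / (2 t))`. Splitting `log ((t + 1) / 2) = ell t + log t` makes every
derivative below a rational function plus a rational multiple of `ell`. -/
noncomputable def ell (t : ℝ) : ℝ := log ((t + 1) / 2) - log t

noncomputable def f2Num (t : ℝ) : ℝ := (t ^ 3 + 1) * log ((t + 1) / 2) - t ^ 3 * log t

def f2Den (t : ℝ) : ℝ := (t - 1) ^ 2 * (t + 1)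

noncomputable def f2 (t : ℝ) : ℝ := 8 / 3 * (1 + f2Num t / f2Den t)

lemma ell_one : ell 1 = 0 := by norm_num [ell]

lemma f2Num_eq (t : ℝ) : f2Num t = (t ^ 3 + 1) * ell t + log t := by
  rw [f2Num, ell]; ring

lemma hasDerivAt_ell {x : ℝ} (hx : 0 < x) : HasDerivAt ell ((x + 1)⁻¹ - x⁻¹) x :=
  ((((hasDerivAt_id' x).add_const 1).div_const 2).log (by positivity)).sub
    (hasDerivAt_log hx.ne') |>.congr_deriv (by field_simp)

lemma hasDerivAt_f2Num {x : ℝ} (hx : 0 < x) : HasDerivAt f2Num (3 * x ^ 2 * ell x + 1 - x) x := by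
  rw [show f2Num = fun t => (t ^ 3 + 1) * ell t + log t from funext f2Num_eq]
  exact (((hasDerivAt_pow 3 x).add_const 1).mul (hasDerivAt_ell hx)).add
    (hasDerivAt_log hx.ne') |>.congr_deriv (by field_simp; ring)

lemma hasDerivAt_f2Den (x : ℝ) : HasDerivAt f2Den ((x - 1) * (3 * x + 1)) x :=
  (((hasDerivAt_id' x).sub_const 1).pow 2).mul ((hasDerivAt_id' x).add_const 1)
    |>.congr_deriv (by simp only [Pi.pow_apply]; ring)

lemma f2Den_pos {t : ℝ} (ht : 1 < t) : 0 < f2Den t := by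
  have : 0 < t - 1 := by linarith
  unfold f2Den; positivity

lemma one_sub_lt_mul_ell {t : ℝ} (ht : 1 < t) : 1 - t < (t + 1) * ell t := by
  have ht0 : 0 < t := by linarith
  have hlog : log (2 * t / (t + 1)) < 2 * t / (t + 1) - 1 :=
    log_lt_sub_one_of_pos (by positivity) (by rw [Ne, div_eq_one_iff_eq (by positivity)]; linarith)
  have hell : ell t = -log (2 * t / (t + 1)) := by
    rw [ell, ← log_div (by positivity) ht0.ne', ← log_inv, inv_div]
    congr 1; field_simp
  calc 1 - t = (t + 1) * -(2 * t / (t + 1) - 1) := by field_simp; ring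
    _ < (t + 1) * ell t := by rw [hell]; gcongr

lemma sq_mul_ell_add_log_pos {t : ℝ} (ht : 1 < t) :
    0 < (t + 1) ^ 2 * ell t + log t + t * (t - 1) := by
  apply pos_of_hasDerivAt_pos ht (f' := fun x => 2 * ((x + 1) * ell x - (1 - x)))
  · intro x hx
    have hx0 : 0 < x := by linarith
    exact (((((hasDerivAt_id' x).add_const 1).pow 2).mul (hasDerivAt_ell hx0)).add
      (hasDerivAt_log hx0.ne')).add ((hasDerivAt_id' x).mul ((hasDerivAt_id' x).sub_const 1))
      |>.congr_deriv (by simp only [Pi.pow_apply]; field_simp; ring)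
  · intro x hx
    linarith [one_sub_lt_mul_ell hx]
  · simp [ell_one]

lemma cube_mul_ell_add_log_pos {t : ℝ} (ht : 1 < t) :
    0 < (t + 1) ^ 3 * ell t + (3 * t + 1) * log t + f2Den t := by
  apply pos_of_hasDerivAt_pos ht
    (f' := fun x => 3 * ((x + 1) ^ 2 * ell x + log x + x * (x - 1)))
  · intro x hx
    have hx0 : 0 < x := by linarith
    exact (((((hasDerivAt_id' x).add_const 1).pow 3).mul (hasDerivAt_ell hx0)).add
      ((((hasDerivAt_id' x).const_mul 3).add_const 1).mul (hasDerivAt_log hx0.ne'))).add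
      (hasDerivAt_f2Den x) |>.congr_deriv (by simp only [Pi.pow_apply]; field_simp; ring)
  · intro x hx
    linarith [sq_mul_ell_add_log_pos hx]
  · simp [ell_one, f2Den]

lemma hasDerivAt_f2 {t : ℝ} (ht : 1 < t) :
    HasDerivAt f2 (-(8 / 3) * (t - 1) * ((t + 1) ^ 3 * ell t + (3 * t + 1) * log t + f2Den t)
      / f2Den t ^ 2) t :=
  (((hasDerivAt_f2Num (by linarith)).div (hasDerivAt_f2Den t) (f2Den_pos ht).ne').const_add 1
    |>.const_mul (8 / 3)) |>.congr_deriv (by rw [f2Num_eq]; simp only [f2Den]; ring)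

lemma f2_strictAntiOn : StrictAntiOn f2 (Ioi 1) := by
  refine strictAntiOn_of_hasDerivWithinAt_neg (convex_Ioi 1)
    (fun x hx => (hasDerivAt_f2 hx).continuousAt.continuousWithinAt)
    (fun x hx => (hasDerivAt_f2 (interior_subset hx)).hasDerivWithinAt) (fun x hx => ?_)
  rw [interior_Ioi, mem_Ioi] at hx
  have hx1 : 0 < x - 1 := by linarith
  have hH := cube_mul_ell_add_log_pos hx
  have hD := f2Den_pos hx
  apply div_neg_of_neg_of_pos _ (by positivity)
  rw [neg_mul, neg_mul, neg_lt_zero]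
  positivity

lemma eight_mul_ell_lt {t : ℝ} (ht : 1 < t) : 8 * ell t < 8 / (t + 1) + 4 / (t + 1) ^ 2 - 5 := by
  rw [← sub_pos]
  apply pos_of_hasDerivAt_pos ht (f' := fun x => 8 / (x * (x + 1) ^ 3))
  · intro x hx
    have hx0 : 0 < x := by linarith
    have hx1 := (hasDerivAt_id' x).add_const 1
    exact (((hx1.inv (by positivity)).const_mul 8).add
      ((hx1.pow 2).inv (by positivity : (x + 1) ^ 2 ≠ 0) |>.const_mul 4)).sub_const 5
      |>.sub ((hasDerivAt_ell hx0).const_mul 8)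
      |>.congr_deriv (by simp only [Pi.pow_apply]; field_simp; ring)
  · intro x hx
    have hx0 : 0 < x := by linarith
    positivity
  · norm_num [ell_one]

lemma eight_mul_mul_ell_lt {t : ℝ} (ht : 1 < t) :
    8 * t * ell t < 4 * t / (t + 1) + 3 - 5 * t := by
  rw [← sub_pos]
  apply pos_of_hasDerivAt_pos ht
    (f' := fun x => 8 / (x + 1) + 4 / (x + 1) ^ 2 - 5 - 8 * ell x)
  · intro x hx
    have hx0 : 0 < x := by linarith
    exact ((((hasDerivAt_id' x).const_mul 4).div ((hasDerivAt_id' x).add_const 1)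
      (by positivity)).add_const 3).sub ((hasDerivAt_id' x).const_mul 5)
      |>.sub (((hasDerivAt_id' x).const_mul 8).mul (hasDerivAt_ell hx0))
      |>.congr_deriv (by field_simp; ring)
  · intro x hx
    linarith [eight_mul_ell_lt hx]
  · norm_num [ell_one]

lemma eight_mul_sq_mul_ell_lt {t : ℝ} (ht : 1 < t) :
    8 * t ^ 2 * ell t < 6 * t - 5 * t ^ 2 - 1 := by
  rw [← sub_pos]
  apply pos_of_hasDerivAt_pos ht
    (f' := fun x => 2 * (4 * x / (x + 1) + 3 - 5 * x - 8 * x * ell x))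
  · intro x hx
    have hx0 : 0 < x := by linarith
    exact ((((hasDerivAt_id' x).const_mul 6).sub ((hasDerivAt_pow 2 x).const_mul 5)).sub_const 1)
      |>.sub (((hasDerivAt_pow 2 x).const_mul 8).mul (hasDerivAt_ell hx0))
      |>.congr_deriv (by field_simp; ring)
  · intro x hx
    linarith [eight_mul_mul_ell_lt hx]
  · norm_num [ell_one]

lemma eight_mul_f2Num_add_five_mul_f2Den_neg {t : ℝ} (ht : 1 < t) :
    8 * f2Num t + 5 * f2Den t < 0 := by
  rw [← neg_pos]
  apply pos_of_hasDerivAt_pos ht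
    (f' := fun x => 3 * (6 * x - 5 * x ^ 2 - 1 - 8 * x ^ 2 * ell x))
  · intro x hx
    exact (((hasDerivAt_f2Num (by linarith)).const_mul 8).add
      ((hasDerivAt_f2Den x).const_mul 5)).neg |>.congr_deriv (by ring)
  · intro x hx
    linarith [eight_mul_sq_mul_ell_lt hx]
  · norm_num [f2Num, f2Den]

lemma lt_six_mul_mul_ell_add_log_two {t : ℝ} (ht : 1 < t) :
    3 * t / (t + 1) + 1 < 6 * t * ell t + (6 * t - 2) * log 2 := by
  have ht0 : 0 < t := by linarith
  have hell : ell t + log 2 = log (1 + t⁻¹) := by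
    rw [ell, ← log_div (by positivity) ht0.ne', ← log_mul (by positivity) two_ne_zero]
    congr 1; field_simp
  have hlog : 2 / (2 * t + 1) < ell t + log 2 := by
    rw [hell]; convert lt_log_one_add_of_pos (inv_pos.2 ht0) using 1; field_simp; ring
  have hfrac : 5 / 2 ≤ 12 * t / (2 * t + 1) - 3 * t / (t + 1) := by
    rw [div_sub_div _ _ (by positivity) (by positivity), le_div_iff₀ (by positivity)]
    nlinarith
  have : 12 * t / (2 * t + 1) < 6 * t * (ell t + log 2) := by
    calc 12 * t / (2 * t + 1) = 6 * t * (2 / (2 * t + 1)) := by ring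
      _ < 6 * t * (ell t + log 2) := by gcongr
  linarith [log_two_lt_d9]

lemma sub_one_lt_sq_mul_ell_add_log_two {t : ℝ} (ht : 1 < t) :
    t - 1 < 3 * t ^ 2 * ell t + (t - 1) * (3 * t + 1) * log 2 := by
  rw [← sub_pos]
  apply pos_of_hasDerivAt_pos ht
    (f' := fun x => 6 * x * ell x + (6 * x - 2) * log 2 - (3 * x / (x + 1) + 1))
  · intro x hx
    have hx0 : 0 < x := by linarith
    have hid := hasDerivAt_id' x
    exact (((hasDerivAt_pow 2 x).const_mul 3).mul (hasDerivAt_ell hx0)).add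
      (((hid.sub_const 1).mul ((hid.const_mul 3).add_const 1)).mul_const (log 2))
      |>.sub (hid.sub_const 1) |>.congr_deriv (by field_simp; ring)
  · intro x hx
    linarith [lt_six_mul_mul_ell_add_log_two hx]
  · norm_num [ell_one]

lemma f2Num_add_log_two_mul_f2Den_pos {t : ℝ} (ht : 1 < t) :
    0 < f2Num t + log 2 * f2Den t := by
  apply pos_of_hasDerivAt_pos ht
    (f' := fun x => 3 * x ^ 2 * ell x + (x - 1) * (3 * x + 1) * log 2 - (x - 1))
  · intro x hx
    exact (hasDerivAt_f2Num (by linarith)).add ((hasDerivAt_f2Den x).const_mul (log 2))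
      |>.congr_deriv (by ring)
  · intro x hx
    linarith [sub_one_lt_sq_mul_ell_add_log_two hx]
  · norm_num [f2Num, f2Den]

lemma lt_f2 {t : ℝ} (ht : 1 < t) : 8 * (1 - log 2) / 3 < f2 t := by
  have hN : -log 2 < f2Num t / f2Den t := by
    rw [lt_div_iff₀ (f2Den_pos ht)]; linarith [f2Num_add_log_two_mul_f2Den_pos ht]
  unfold f2; linarith

lemma f2_lt_one {t : ℝ} (ht : 1 < t) : f2 t < 1 := by
  have hN : f2Num t / f2Den t < -(5 / 8) := by
    rw [div_lt_iff₀ (f2Den_pos ht)]; linarith [eight_mul_f2Num_add_five_mul_f2Den_neg ht]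
  unfold f2; linarith

theorem f2_strict_anti_and_bounds :
    StrictAntiOn (fun t : ℝ =>
      (8/3) * (1 + ((t^3 + 1) * Real.log ((t + 1) / 2) - t^3 * Real.log t) /
        ((t - 1)^2 * (t + 1)))) (Set.Ioi 1) ∧
    ∀ t : ℝ, 1 < t →
      8 * (1 - Real.log 2) / 3 <
        (8/3) * (1 + ((t^3 + 1) * Real.log ((t + 1) / 2) - t^3 * Real.log t) /
          ((t - 1)^2 * (t + 1))) ∧
      (8/3) * (1 + ((t^3 + 1) * Real.log ((t + 1) / 2) - t^3 * Real.log t) /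
        ((t - 1)^2 * (t + 1))) < 1 :=
  ⟨f2_strictAntiOn, fun _ ht => ⟨lt_f2 ht, f2_lt_one ht⟩⟩
end

section
/- For 0 < a < b, A(a,b) < I_r(a,b) < ((2 + √2·ln(1+√2))/3)·A(a,b), where I_r(a,b) = (1/(b−a)²)·∫ₐᵇ∫ₐᵇ √((x²+y²)/2) dx dy and A(a,b) = (a+b)/2. -/
/-!
The lower bound is the strict inequality `(x + y) / 2 < r(x, y)` off the diagonal, integrated.

For the upper bound, translate the square to `[0, s]²` with `s = b - a`. Since `r` is a norm on
`ℝ²` (a scaled Euclidean norm), `r(a + u, a + v) ≤ r(a, a) + r(u, v) = a + r(u, v)`, and by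
homogeneity `∫∫_{[0,s]²} r = s³ ∫∫_{[0,1]²} r = s³ c / 2` with `c = (2 + √2 log(1 + √2)) / 3`.
Hence `I_r ≤ a + s c / 2`, which is less than `c (a + b) / 2 = c a + s c / 2` because
`c > 1`, i.e. `√2 log(1 + √2) > 1`.
-/

open intervalIntegral Real Set

noncomputable def rootSquareMean (x y : ℝ) : ℝ := √((x ^ 2 + y ^ 2) / 2)

@[fun_prop]
theorem Continuous.rootSquareMean {X : Type*} [TopologicalSpace X] {f g : X → ℝ}
    (hf : Continuous f) (hg : Continuous g) : Continuous fun p => rootSquareMean (f p) (g p) := by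
  unfold _root_.rootSquareMean
  fun_prop

theorem add_div_two_le_rootSquareMean (x y : ℝ) : (x + y) / 2 ≤ rootSquareMean x y :=
  le_sqrt_of_sq_le (by nlinarith [sq_nonneg (x - y)])

theorem add_div_two_lt_rootSquareMean {x y : ℝ} (h : x ≠ y) : (x + y) / 2 < rootSquareMean x y :=
  lt_sqrt_of_sq_lt (by nlinarith [sq_pos_of_ne_zero (sub_ne_zero.2 h)])

theorem rootSquareMean_self (c : ℝ) : rootSquareMean c c = |c| := by
  rw [rootSquareMean, add_self_div_two, sqrt_sq_eq_abs]

theorem rootSquareMean_add_le (x y u v : ℝ) :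
    rootSquareMean (x + u) (y + v) ≤ rootSquareMean x y + rootSquareMean u v := by
  have hcs : x * u + y * v ≤ √(x ^ 2 + y ^ 2) * √(u ^ 2 + v ^ 2) := by
    rw [← sqrt_mul (by positivity)]
    exact le_sqrt_of_sq_le (by nlinarith [sq_nonneg (x * v - y * u)])
  have hprod : rootSquareMean x y * rootSquareMean u v =
      √(x ^ 2 + y ^ 2) * √(u ^ 2 + v ^ 2) / 2 := by
    rw [rootSquareMean, rootSquareMean, sqrt_div' _ zero_le_two, sqrt_div' _ zero_le_two]
    field_simp
    rw [sq_sqrt zero_le_two]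
    ring
  have hxy : rootSquareMean x y ^ 2 = (x ^ 2 + y ^ 2) / 2 := sq_sqrt (by positivity)
  have huv : rootSquareMean u v ^ 2 = (u ^ 2 + v ^ 2) / 2 := sq_sqrt (by positivity)
  refine sqrt_le_iff.2 ⟨add_nonneg (sqrt_nonneg _) (sqrt_nonneg _), ?_⟩
  nlinarith

theorem rootSquareMean_mul_mul {s : ℝ} (hs : 0 ≤ s) (u v : ℝ) :
    rootSquareMean (s * u) (s * v) = s * rootSquareMean u v := by
  rw [rootSquareMean, rootSquareMean, ← sqrt_sq hs, ← sqrt_mul (sq_nonneg s), sqrt_sq hs]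
  ring_nf

theorem integral_integral_comp_add_add (f : ℝ → ℝ → ℝ) (c a b : ℝ) :
    ∫ x in a..b, ∫ y in a..b, f (c + x) (c + y) =
      ∫ x in c + a..c + b, ∫ y in c + a..c + b, f x y := by
  have inner (x : ℝ) : ∫ y in a..b, f x (c + y) = ∫ y in c + a..c + b, f x y :=
    integral_comp_add_left (f x) c
  simp only [inner]
  exact integral_comp_add_left (fun x => ∫ y in c + a..c + b, f x y) c

theorem integral_integral_comp_mul_mul (f : ℝ → ℝ → ℝ) (c a b : ℝ) :
    c ^ 2 * ∫ x in a..b, ∫ y in a..b, f (c * x) (c * y) =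
      ∫ x in c * a..c * b, ∫ y in c * a..c * b, f x y := by
  have inner (x : ℝ) : c * ∫ y in a..b, f x (c * y) = ∫ y in c * a..c * b, f x y :=
    smul_integral_comp_mul_left (f x) c
  rw [sq, mul_assoc, ← integral_const_mul]
  simp only [inner]
  exact smul_integral_comp_mul_left (fun x => ∫ y in c * a..c * b, f x y) c

theorem integral_integral_add_div_two (a b : ℝ) :
    ∫ x in a..b, ∫ y in a..b, (x + y) / 2 = (b - a) ^ 2 * ((a + b) / 2) := by
  have inner (x : ℝ) : ∫ y in a..b, (x + y) / 2 = (b - a) / 2 * x + (b ^ 2 - a ^ 2) / 4 := by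
    simp only [add_div, intervalIntegrable_const, intervalIntegrable_id,
      IntervalIntegrable.div_const, integral_add, integral_div, integral_const, smul_eq_mul,
      integral_id]
    ring
  rw [integral_congr fun x _ => inner x,
    integral_add ((continuous_const_mul _).intervalIntegrable _ _) intervalIntegrable_const,
    integral_const_mul, integral_id, intervalIntegral.integral_const,
    smul_eq_mul]
  ring

section Monotone

variable {f g : ℝ → ℝ → ℝ} {a b : ℝ}

theorem integral_integral_mono_on_s12 (hab : a ≤ b) (hf : Continuous f.uncurry)
    (hg : Continuous g.uncurry) (hle : ∀ x ∈ Icc a b, ∀ y ∈ Icc a b, f x y ≤ g x y) :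
    ∫ x in a..b, ∫ y in a..b, f x y ≤ ∫ x in a..b, ∫ y in a..b, g x y := by
  refine integral_mono_on hab
    ((continuous_parametric_intervalIntegral_of_continuous' hf a b).intervalIntegrable a b)
    ((continuous_parametric_intervalIntegral_of_continuous' hg a b).intervalIntegrable a b)
    fun x hx => integral_mono_on hab ((hf.uncurry_left x).intervalIntegrable a b)
      ((hg.uncurry_left x).intervalIntegrable a b) (hle x hx)

theorem integral_integral_lt_of_le_of_lt (hab : a < b) (hf : Continuous f.uncurry)
    (hg : Continuous g.uncurry) (hle : ∀ x ∈ Icc a b, ∀ y ∈ Icc a b, f x y ≤ g x y)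
    {x₀ y₀ : ℝ} (hx₀ : x₀ ∈ Icc a b) (hy₀ : y₀ ∈ Icc a b) (hlt : f x₀ y₀ < g x₀ y₀) :
    ∫ x in a..b, ∫ y in a..b, f x y < ∫ x in a..b, ∫ y in a..b, g x y := by
  have hinner (x : ℝ) (hx : x ∈ Icc a b) : ∫ y in a..b, f x y ≤ ∫ y in a..b, g x y :=
    integral_mono_on hab.le ((hf.uncurry_left x).intervalIntegrable a b)
      ((hg.uncurry_left x).intervalIntegrable a b) (hle x hx)
  refine integral_lt_integral_of_continuousOn_of_le_of_exists_lt hab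
    (continuous_parametric_intervalIntegral_of_continuous' hf a b).continuousOn
    (continuous_parametric_intervalIntegral_of_continuous' hg a b).continuousOn
    (fun x hx => hinner x (Ioc_subset_Icc_self hx)) ⟨x₀, hx₀, ?_⟩
  exact integral_lt_integral_of_continuousOn_of_le_of_exists_lt hab
    (hf.uncurry_left x₀).continuousOn (hg.uncurry_left x₀).continuousOn
    (fun y hy => hle x₀ hx₀ y (Ioc_subset_Icc_self hy)) ⟨y₀, hy₀, hlt⟩

end Monotone

theorem hasDerivAt_sqrt_sq_add_sq {x : ℝ} (hx : x ≠ 0) (y : ℝ) :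
    HasDerivAt (fun y => √(x ^ 2 + y ^ 2)) (y / √(x ^ 2 + y ^ 2)) y := by
  have h := ((hasDerivAt_pow 2 y).const_add (x ^ 2)).sqrt (by positivity)
  convert h using 1
  field_simp
  ring

theorem integral_sqrt_sq_add_sq {x : ℝ} (hx : 0 < x) :
    ∫ y in (0)..1, √(x ^ 2 + y ^ 2) =
      (√(1 + x ^ 2) + x ^ 2 * (log (1 + √(1 + x ^ 2)) - log x)) / 2 := by
  have hderiv (y : ℝ) : HasDerivAt
      (fun y => (y * √(x ^ 2 + y ^ 2) + x ^ 2 * log (y + √(x ^ 2 + y ^ 2))) / 2)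
      (√(x ^ 2 + y ^ 2)) y := by
    have hS : 0 < √(x ^ 2 + y ^ 2) := sqrt_pos.2 (by positivity)
    have hS2 : √(x ^ 2 + y ^ 2) ^ 2 = x ^ 2 + y ^ 2 := sq_sqrt (by positivity)
    have hyS : 0 < y + √(x ^ 2 + y ^ 2) := by nlinarith [neg_abs_le y, sq_abs y, abs_nonneg y]
    have hdS := hasDerivAt_sqrt_sq_add_sq hx.ne' y
    refine ((((hasDerivAt_id' y).fun_mul hdS).fun_add
      ((((hasDerivAt_id' y).fun_add hdS).log hyS.ne').const_mul (x ^ 2))).div_const 2).congr_deriv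
      ?_
    field_simp
    nlinarith [hS2]
  rw [integral_eq_sub_of_hasDerivAt (fun y _ => hderiv y)
    (Continuous.intervalIntegrable (by fun_prop) _ _)]
  simp only [one_pow, one_mul, ne_eq, OfNat.ofNat_ne_zero, not_false_eq_true, zero_pow,
    add_zero, sqrt_sq hx.le, zero_mul, add_comm, zero_add]
  ring

theorem integral_integral_sqrt_sq_add_sq :
    ∫ x in (0)..1, ∫ y in (0)..1, √(x ^ 2 + y ^ 2) = (√2 + log (1 + √2)) / 3 := by
  have hpos (x : ℝ) : 1 + √(1 + x ^ 2) ≠ 0 := by positivity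
  set g : ℝ → ℝ := fun x => (√(1 + x ^ 2) + x ^ 2 * (log (1 + √(1 + x ^ 2)) - log x)) / 2
  -- `x ^ 2 * log x` is written as `x * (x * log x)` to get continuity at `0`.
  set G : ℝ → ℝ := fun x => x * √(1 + x ^ 2) / 3 + arsinh x / 6 +
    (x ^ 3 * log (1 + √(1 + x ^ 2)) - x ^ 2 * (x * log x)) / 6
  have hg : Continuous g := by
    have hg' : g = fun x =>
        (√(1 + x ^ 2) + (x ^ 2 * log (1 + √(1 + x ^ 2)) - x * (x * log x))) / 2 :=
      funext fun x => by ring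
    rw [hg']
    fun_prop (disch := exact hpos _)
  have hG : Continuous G := by
    have := continuous_arsinh
    fun_prop (disch := exact hpos _)
  have hG' (x : ℝ) (hx : x ∈ Ioo 0 1) : HasDerivAt G (g x) x := by
    have hx0 : x ≠ 0 := hx.1.ne'
    have hS : √(1 + x ^ 2) ≠ 0 := by positivity
    have hS2 : √(1 + x ^ 2) ^ 2 = 1 + x ^ 2 := sq_sqrt (by positivity)
    have hdS := hasDerivAt_sqrt_sq_add_sq one_ne_zero x
    simp only [one_pow] at hdS
    refine ((((((hasDerivAt_id' x).fun_mul hdS).div_const 3).fun_add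
      ((hasDerivAt_arsinh x).div_const 6)).fun_add
      ((((hasDerivAt_pow 3 x).fun_mul ((hdS.const_add 1).log (hpos x))).fun_sub
        ((hasDerivAt_pow 2 x).fun_mul ((hasDerivAt_id' x).fun_mul
          (hasDerivAt_log hx0)))).div_const 6))).congr_deriv ?_
    field_simp
    norm_num
    linear_combination (-3 * (1 + √(1 + x ^ 2)) - 3 * x ^ 2) * hS2
  calc ∫ x in (0)..1, ∫ y in (0)..1, √(x ^ 2 + y ^ 2) = ∫ x in (0)..1, g x :=
        integral_congr_ae (.of_forall fun x hx => integral_sqrt_sq_add_sq (by simpa using hx.1))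
    _ = G 1 - G 0 :=
        integral_eq_sub_of_hasDerivAt_of_le zero_le_one hG.continuousOn hG'
          (hg.intervalIntegrable 0 1)
    _ = (√2 + log (1 + √2)) / 3 := by
        norm_num [G, arsinh]
        ring

theorem integral_integral_rootSquareMean_unit :
    ∫ x in (0)..1, ∫ y in (0)..1, rootSquareMean x y = (2 + √2 * log (1 + √2)) / 6 := by
  have h (x y : ℝ) : rootSquareMean x y = √(x ^ 2 + y ^ 2) / √2 := sqrt_div' _ zero_le_two
  simp only [h, integral_div, integral_integral_sqrt_sq_add_sq]
  field_simp
  linear_combination (-3 * log (1 + √2)) * mul_self_sqrt (zero_le_two (α := ℝ))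

theorem integral_integral_rootSquareMean_zero {s : ℝ} (hs : 0 ≤ s) :
    ∫ x in (0)..s, ∫ y in (0)..s, rootSquareMean x y = s ^ 3 * ((2 + √2 * log (1 + √2)) / 6) := by
  have h := integral_integral_comp_mul_mul rootSquareMean s 0 1
  simp only [mul_zero, mul_one, rootSquareMean_mul_mul hs, integral_const_mul,
    integral_integral_rootSquareMean_unit] at h
  rw [← h]
  ring

theorem integral_integral_add_div_two_lt_rootSquareMean {a b : ℝ} (hab : a < b) :
    ∫ x in a..b, ∫ y in a..b, (x + y) / 2 < ∫ x in a..b, ∫ y in a..b, rootSquareMean x y :=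
  integral_integral_lt_of_le_of_lt hab (by fun_prop) (by fun_prop)
    (fun x _ y _ => add_div_two_le_rootSquareMean x y) (left_mem_Icc.2 hab.le)
    (right_mem_Icc.2 hab.le) (add_div_two_lt_rootSquareMean hab.ne)

theorem integral_integral_rootSquareMean_le {a b : ℝ} (ha : 0 ≤ a) (hab : a ≤ b) :
    ∫ x in a..b, ∫ y in a..b, rootSquareMean x y ≤
      (b - a) ^ 2 * (a + (b - a) * ((2 + √2 * log (1 + √2)) / 6)) := by
  have hshift := integral_integral_comp_add_add rootSquareMean a 0 (b - a)
  simp only [add_zero, add_sub_cancel] at hshift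
  have hinner (x : ℝ) : ∫ y in (0)..(b - a), (a + rootSquareMean x y) =
      (b - a) * a + ∫ y in (0)..(b - a), rootSquareMean x y := by
    rw [integral_add intervalIntegrable_const
      (Continuous.intervalIntegrable (by fun_prop) _ _)]
    simp
  rw [← hshift]
  refine (integral_integral_mono_on_s12 (g := fun x y => a + rootSquareMean x y) (sub_nonneg.2 hab)
    (by fun_prop) (by fun_prop) fun x _ y _ => (rootSquareMean_add_le a a x y).trans_eq
      (by rw [rootSquareMean_self, abs_of_nonneg ha])).trans_eq ?_
  rw [integral_congr fun x _ => hinner x, integral_add intervalIntegrable_const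
    (Continuous.intervalIntegrable (by fun_prop) _ _),
    integral_integral_rootSquareMean_zero (sub_nonneg.2 hab)]
  simp only [integral_const_mul, integral_const, sub_zero, smul_eq_mul]
  ring

theorem one_lt_sqrt_two_mul_log_one_add_sqrt_two : 1 < √2 * log (1 + √2) := by
  have hsqrt : 7 / 5 < √2 := lt_sqrt_of_sq_lt (by norm_num)
  have hlog : log 2 + log (6 / 5) ≤ log (1 + √2) := by
    rw [← log_mul two_ne_zero (by norm_num)]
    exact log_le_log (by norm_num) (by linarith)
  have h65 : 1 - (6 / 5 : ℝ)⁻¹ ≤ log (6 / 5) := one_sub_inv_le_log_of_pos (by norm_num)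
  nlinarith [log_two_gt_d9]

theorem Ir_bounds (a b : ℝ) (ha : 0 < a) (hab : a < b) :
    (a + b) / 2 <
      (1 / (b - a)^2) * (∫ x in a..b, ∫ y in a..b, Real.sqrt ((x^2 + y^2) / 2)) ∧
    (1 / (b - a)^2) * (∫ x in a..b, ∫ y in a..b, Real.sqrt ((x^2 + y^2) / 2)) <
      ((2 + Real.sqrt 2 * Real.log (1 + Real.sqrt 2)) / 3) * ((a + b) / 2) := by
  have hs : 0 < (b - a) ^ 2 := pow_pos (sub_pos.2 hab) 2
  have hlower := integral_integral_add_div_two_lt_rootSquareMean hab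
  rw [integral_integral_add_div_two] at hlower
  have hupper := integral_integral_rootSquareMean_le ha.le hab.le
  have hc := one_lt_sqrt_two_mul_log_one_add_sqrt_two
  change _ < 1 / (b - a) ^ 2 * ∫ x in a..b, ∫ y in a..b, rootSquareMean x y ∧
    1 / (b - a) ^ 2 * ∫ x in a..b, ∫ y in a..b, rootSquareMean x y < _
  rw [one_div_mul_eq_div, lt_div_iff₀ hs, div_lt_iff₀ hs]
  constructor
  · linarith
  · nlinarith [mul_pos hs (mul_pos ha (sub_pos.2 hc))]
end

section
/- Let M be a mean function, φ : [0,1] → [0,∞) integrable, and ψ : ℝ₊ → ℝ₊ a 1-Lipschitz function. Then S(a,b) := −∫₀¹φ(t)dt + (a+b)/2 − (ψ(a)+ψ(b))/2 + ∫₀¹ M(φ(t)+ψ(a), φ(t)+ψ(b)) dt satisfies min{a,b} ≤ S(a,b) ≤ max{a,b} and S(a,b) = S(b,a) for all a, b > 0. -/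
/-!
Pointwise, `M (φ t + ψ a) (φ t + ψ b)` lies between `φ t + min (ψ a) (ψ b)` and
`φ t + max (ψ a) (ψ b)`, so after integrating, `S a b` lies between
`(a + b) / 2 ∓ |ψ a - ψ b| / 2`. Since `ψ` is 1-Lipschitz, `|ψ a - ψ b| ≤ |a - b|`, and
`(a + b) / 2 ∓ |a - b| / 2` are exactly `min a b` and `max a b`.
-/

open MeasureTheory intervalIntegral

section Arithmetic

theorem min_eq_midpoint_sub_abs (a b : ℝ) : min a b = (a + b) / 2 - |a - b| / 2 := by
  have := min_add_max a b
  have := max_sub_min_eq_abs a b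
  rw [abs_sub_comm]
  linarith

theorem max_eq_midpoint_add_abs (a b : ℝ) : max a b = (a + b) / 2 + |a - b| / 2 := by
  have := min_add_max a b
  have := min_eq_midpoint_sub_abs a b
  linarith

variable {a b c d : ℝ}

theorem min_le_midpoint_sub_midpoint_add_min (h : |c - d| ≤ |a - b|) :
    min a b ≤ (a + b) / 2 - (c + d) / 2 + min c d := by
  rw [min_eq_midpoint_sub_abs a b, min_eq_midpoint_sub_abs c d]
  linarith

theorem midpoint_sub_midpoint_add_max_le_max (h : |c - d| ≤ |a - b|) :
    (a + b) / 2 - (c + d) / 2 + max c d ≤ max a b := by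
  rw [max_eq_midpoint_add_abs a b, max_eq_midpoint_add_abs c d]
  linarith

end Arithmetic

section ShiftedMean

variable {M : ℝ → ℝ → ℝ} {φ : ℝ → ℝ} {l u c d : ℝ}

theorem integral_add_min_le_integral_shift (hlu : l ≤ u)
    (hM : ∀ x y : ℝ, 0 < x → 0 < y → min x y ≤ M x y)
    (hφ : IntervalIntegrable φ volume l u) (hφnn : ∀ t ∈ Set.Icc l u, 0 ≤ φ t)
    (hc : 0 < c) (hd : 0 < d)
    (hint : IntervalIntegrable (fun t => M (φ t + c) (φ t + d)) volume l u) :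
    (∫ t in l..u, φ t) + (u - l) * min c d ≤ ∫ t in l..u, M (φ t + c) (φ t + d) := by
  calc (∫ t in l..u, φ t) + (u - l) * min c d = ∫ t in l..u, (φ t + min c d) := by
        rw [integral_add hφ intervalIntegrable_const, intervalIntegral.integral_const, smul_eq_mul]
    _ ≤ ∫ t in l..u, M (φ t + c) (φ t + d) := by
        refine integral_mono_on hlu (hφ.add intervalIntegrable_const) hint fun t ht => ?_
        have := hφnn t ht
        rw [← min_add_add_left]
        exact hM _ _ (by linarith) (by linarith)

theorem integral_shift_le_integral_add_max (hlu : l ≤ u)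
    (hM : ∀ x y : ℝ, 0 < x → 0 < y → M x y ≤ max x y)
    (hφ : IntervalIntegrable φ volume l u) (hφnn : ∀ t ∈ Set.Icc l u, 0 ≤ φ t)
    (hc : 0 < c) (hd : 0 < d)
    (hint : IntervalIntegrable (fun t => M (φ t + c) (φ t + d)) volume l u) :
    ∫ t in l..u, M (φ t + c) (φ t + d) ≤ (∫ t in l..u, φ t) + (u - l) * max c d := by
  calc ∫ t in l..u, M (φ t + c) (φ t + d) ≤ ∫ t in l..u, (φ t + max c d) := by
        refine integral_mono_on hlu hint (hφ.add intervalIntegrable_const) fun t ht => ?_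
        have := hφnn t ht
        rw [← max_add_add_left]
        exact hM _ _ (by linarith) (by linarith)
    _ = (∫ t in l..u, φ t) + (u - l) * max c d := by
        rw [integral_add hφ intervalIntegrable_const, intervalIntegral.integral_const, smul_eq_mul]

theorem integral_shift_comm (hlu : l ≤ u)
    (hM : ∀ x y : ℝ, 0 < x → 0 < y → M x y = M y x) (hφnn : ∀ t ∈ Set.Icc l u, 0 ≤ φ t)
    (hc : 0 < c) (hd : 0 < d) :
    ∫ t in l..u, M (φ t + c) (φ t + d) = ∫ t in l..u, M (φ t + d) (φ t + c) := by
  refine integral_congr fun t ht => ?_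
  rw [Set.uIcc_of_le hlu] at ht
  have := hφnn t ht
  exact hM _ _ (by linarith) (by linarith)

end ShiftedMean

theorem S_is_mean_general (M : ℝ → ℝ → ℝ) (φ ψ : ℝ → ℝ)
    (hMmean : ∀ x y : ℝ, 0 < x → 0 < y → min x y ≤ M x y ∧ M x y ≤ max x y)
    (hMsymm : ∀ x y : ℝ, 0 < x → 0 < y → M x y = M y x)
    (hφint : IntegrableOn φ (Set.Icc 0 1) volume)
    (hφnn : ∀ t ∈ Set.Icc (0:ℝ) 1, 0 ≤ φ t)
    (hψpos : ∀ x : ℝ, 0 < x → 0 < ψ x)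
    (hψlip : ∀ x y : ℝ, 0 < x → 0 < y → |ψ x - ψ y| ≤ |x - y|)
    (a b : ℝ) (ha : 0 < a) (hb : 0 < b)
    (hint : IntervalIntegrable (fun t => M (φ t + ψ a) (φ t + ψ b)) volume 0 1) :
    (min a b ≤ -(∫ t in (0:ℝ)..1, φ t) + (a + b) / 2 - (ψ a + ψ b) / 2 +
        ∫ t in (0:ℝ)..1, M (φ t + ψ a) (φ t + ψ b)) ∧
    (-(∫ t in (0:ℝ)..1, φ t) + (a + b) / 2 - (ψ a + ψ b) / 2 +
        (∫ t in (0:ℝ)..1, M (φ t + ψ a) (φ t + ψ b)) ≤ max a b) ∧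
    (-(∫ t in (0:ℝ)..1, φ t) + (a + b) / 2 - (ψ a + ψ b) / 2 +
        (∫ t in (0:ℝ)..1, M (φ t + ψ a) (φ t + ψ b)) =
      -(∫ t in (0:ℝ)..1, φ t) + (b + a) / 2 - (ψ b + ψ a) / 2 +
        ∫ t in (0:ℝ)..1, M (φ t + ψ b) (φ t + ψ a)) := by
  have hφ : IntervalIntegrable φ volume 0 1 :=
    (intervalIntegrable_iff_integrableOn_Icc_of_le zero_le_one).2 hφint
  have hψa := hψpos a ha
  have hψb := hψpos b hb
  have hlip := hψlip a b ha hb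
  have hlow := integral_add_min_le_integral_shift zero_le_one
    (fun x y hx hy => (hMmean x y hx hy).1) hφ hφnn hψa hψb hint
  have hhigh := integral_shift_le_integral_add_max zero_le_one
    (fun x y hx hy => (hMmean x y hx hy).2) hφ hφnn hψa hψb hint
  refine ⟨?_, ?_, ?_⟩
  · linarith [min_le_midpoint_sub_midpoint_add_min hlip]
  · linarith [midpoint_sub_midpoint_add_max_le_max hlip]
  · rw [integral_shift_comm zero_le_one hMsymm hφnn hψa hψb]
    ring

theorem S_is_mean (M : ℝ → ℝ → ℝ) (φ ψ : ℝ → ℝ)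
    (hMmean : ∀ x y : ℝ, 0 < x → 0 < y → min x y ≤ M x y ∧ M x y ≤ max x y)
    (hMsymm : ∀ x y : ℝ, 0 < x → 0 < y → M x y = M y x)
    (hφint : IntegrableOn φ (Set.Icc 0 1) volume)
    (hφnn : ∀ t ∈ Set.Icc (0:ℝ) 1, 0 ≤ φ t)
    (hψpos : ∀ x : ℝ, 0 < x → 0 < ψ x)
    (hψlip : ∀ x y : ℝ, 0 < x → 0 < y → |ψ x - ψ y| ≤ |x - y|)
    (a b : ℝ) (ha : 0 < a) (hb : 0 < b)
    (hint : IntervalIntegrable (fun t => M (φ t + ψ a) (φ t + ψ b)) volume 0 1)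
    (hint' : IntervalIntegrable (fun t => M (φ t + ψ b) (φ t + ψ a)) volume 0 1) :
    (min a b ≤ -(∫ t in (0:ℝ)..1, φ t) + (a + b) / 2 - (ψ a + ψ b) / 2 +
        ∫ t in (0:ℝ)..1, M (φ t + ψ a) (φ t + ψ b)) ∧
    (-(∫ t in (0:ℝ)..1, φ t) + (a + b) / 2 - (ψ a + ψ b) / 2 +
        (∫ t in (0:ℝ)..1, M (φ t + ψ a) (φ t + ψ b)) ≤ max a b) ∧
    (-(∫ t in (0:ℝ)..1, φ t) + (a + b) / 2 - (ψ a + ψ b) / 2 +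
        (∫ t in (0:ℝ)..1, M (φ t + ψ a) (φ t + ψ b)) =
      -(∫ t in (0:ℝ)..1, φ t) + (b + a) / 2 - (ψ b + ψ a) / 2 +
        ∫ t in (0:ℝ)..1, M (φ t + ψ b) (φ t + ψ a)) :=
  S_is_mean_general M φ ψ hMmean hMsymm hφint hφnn hψpos hψlip a b ha hb hint
end

section
/- Let M be a mean function, φ : [0,1] → ℝ₊ integrable with ∫₀¹φ(t)dt > 0, and ψ : ℝ₊ → ℝ₊ a 1-Lipschitz function. Then P(a,b) := (a+b)/2 − (ψ(a)+ψ(b))/2 + (1/∫₀¹φ(t)dt)·∫₀¹ M(φ(t)·ψ(a), φ(t)·ψ(b)) dt satisfies min{a,b} ≤ P(a,b) ≤ max{a,b} for all a, b > 0. -/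
/-!
Let `m ≤ X` be the values `ψ a`, `ψ b` in order. Because `M` is a mean,
`φ t * m ≤ M (φ t * ψ a) (φ t * ψ b) ≤ φ t * X`, so the `φ`-weighted average `J` of the integrand
lies in `[m, X]`. Hence `P(a, b) = (a + b)/2 - (m + X)/2 + J` differs from `(a + b)/2` by at most
`(X - m)/2 = |ψ a - ψ b|/2 ≤ |a - b|/2`.
-/

open MeasureTheory intervalIntegral

theorem mul_min_le_and_le_mul_max_of_isMean {M : ℝ → ℝ → ℝ}
    (hM : ∀ x y : ℝ, 0 < x → 0 < y → min x y ≤ M x y ∧ M x y ≤ max x y)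
    {s u v : ℝ} (hs : 0 < s) (hu : 0 < u) (hv : 0 < v) :
    s * min u v ≤ M (s * u) (s * v) ∧ M (s * u) (s * v) ≤ s * max u v := by
  rw [mul_min_of_nonneg _ _ hs.le, mul_max_of_nonneg _ _ hs.le]
  exact hM _ _ (mul_pos hs hu) (mul_pos hs hv)

section WeightedAverage

variable {f w : ℝ → ℝ} {a b : ℝ}

theorem le_one_div_integral_mul_integral {m : ℝ} (hab : a ≤ b)
    (hw : IntervalIntegrable w volume a b) (hf : IntervalIntegrable f volume a b)
    (hw_pos : 0 < ∫ t in a..b, w t) (hle : ∀ t ∈ Set.Icc a b, w t * m ≤ f t) :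
    m ≤ (1 / ∫ t in a..b, w t) * ∫ t in a..b, f t := by
  have hint : (∫ t in a..b, w t) * m ≤ ∫ t in a..b, f t := by
    rw [← intervalIntegral.integral_mul_const]
    exact integral_mono_on hab (hw.mul_const m) hf hle
  rw [one_div_mul_eq_div, le_div_iff₀ hw_pos, mul_comm]
  exact hint

theorem one_div_integral_mul_integral_le {X : ℝ} (hab : a ≤ b)
    (hw : IntervalIntegrable w volume a b) (hf : IntervalIntegrable f volume a b)
    (hw_pos : 0 < ∫ t in a..b, w t) (hle : ∀ t ∈ Set.Icc a b, f t ≤ w t * X) :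
    (1 / ∫ t in a..b, w t) * (∫ t in a..b, f t) ≤ X := by
  have hint : ∫ t in a..b, f t ≤ (∫ t in a..b, w t) * X := by
    rw [← intervalIntegral.integral_mul_const]
    exact integral_mono_on hab hf (hw.mul_const X) hle
  rw [one_div_mul_eq_div, div_le_iff₀ hw_pos, mul_comm]
  exact hint

end WeightedAverage

theorem min_le_midpoint_shift_and_le_max {a b u v J : ℝ} (huv : |u - v| ≤ |a - b|)
    (hJmin : min u v ≤ J) (hJmax : J ≤ max u v) :
    min a b ≤ (a + b) / 2 - (u + v) / 2 + J ∧ (a + b) / 2 - (u + v) / 2 + J ≤ max a b := by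
  have huv' : max u v - min u v ≤ max a b - min a b := by
    rwa [max_sub_min_eq_abs', max_sub_min_eq_abs']
  constructor <;> linarith [min_add_max u v, min_add_max a b]

theorem P_is_mean_general (M : ℝ → ℝ → ℝ) (φ ψ : ℝ → ℝ)
    (hMmean : ∀ x y : ℝ, 0 < x → 0 < y → min x y ≤ M x y ∧ M x y ≤ max x y)
    (hφint : IntegrableOn φ (Set.Icc 0 1) volume)
    (hφpos : ∀ t ∈ Set.Icc (0:ℝ) 1, 0 < φ t)
    (hφbar : 0 < ∫ t in (0:ℝ)..1, φ t)
    (hψpos : ∀ x : ℝ, 0 < x → 0 < ψ x)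
    (hψlip : ∀ x y : ℝ, 0 < x → 0 < y → |ψ x - ψ y| ≤ |x - y|)
    (a b : ℝ) (ha : 0 < a) (hb : 0 < b)
    (hint : IntervalIntegrable (fun t => M (φ t * ψ a) (φ t * ψ b)) volume 0 1) :
    min a b ≤ (a + b) / 2 - (ψ a + ψ b) / 2 +
        (1 / ∫ t in (0:ℝ)..1, φ t) * ∫ t in (0:ℝ)..1, M (φ t * ψ a) (φ t * ψ b) ∧
    (a + b) / 2 - (ψ a + ψ b) / 2 +
        (1 / ∫ t in (0:ℝ)..1, φ t) * (∫ t in (0:ℝ)..1, M (φ t * ψ a) (φ t * ψ b)) ≤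
      max a b := by
  have hφ : IntervalIntegrable φ volume 0 1 :=
    (intervalIntegrable_iff_integrableOn_Icc_of_le zero_le_one).2 hφint
  have hbounds (t : ℝ) (ht : t ∈ Set.Icc (0:ℝ) 1) :=
    mul_min_le_and_le_mul_max_of_isMean hMmean (hφpos t ht) (hψpos a ha) (hψpos b hb)
  exact min_le_midpoint_shift_and_le_max (hψlip a b ha hb)
    (le_one_div_integral_mul_integral zero_le_one hφ hint hφbar fun t ht => (hbounds t ht).1)
    (one_div_integral_mul_integral_le zero_le_one hφ hint hφbar fun t ht => (hbounds t ht).2)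

theorem P_is_mean (M : ℝ → ℝ → ℝ) (φ ψ : ℝ → ℝ)
    (hMmean : ∀ x y : ℝ, 0 < x → 0 < y → min x y ≤ M x y ∧ M x y ≤ max x y)
    (hMsymm : ∀ x y : ℝ, 0 < x → 0 < y → M x y = M y x)
    (hφint : IntegrableOn φ (Set.Icc 0 1) volume)
    (hφpos : ∀ t ∈ Set.Icc (0:ℝ) 1, 0 < φ t)
    (hφbar : 0 < ∫ t in (0:ℝ)..1, φ t)
    (hψpos : ∀ x : ℝ, 0 < x → 0 < ψ x)
    (hψlip : ∀ x y : ℝ, 0 < x → 0 < y → |ψ x - ψ y| ≤ |x - y|)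
    (a b : ℝ) (ha : 0 < a) (hb : 0 < b)
    (hint : IntervalIntegrable (fun t => M (φ t * ψ a) (φ t * ψ b)) volume 0 1) :
    min a b ≤ (a + b) / 2 - (ψ a + ψ b) / 2 +
        (1 / ∫ t in (0:ℝ)..1, φ t) * ∫ t in (0:ℝ)..1, M (φ t * ψ a) (φ t * ψ b) ∧
    (a + b) / 2 - (ψ a + ψ b) / 2 +
        (1 / ∫ t in (0:ℝ)..1, φ t) * (∫ t in (0:ℝ)..1, M (φ t * ψ a) (φ t * ψ b)) ≤
      max a b :=
  P_is_mean_general M φ ψ hMmean hφint hφpos hφbar hψpos hψlip a b ha hb hint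
end

section
/- For a, b > 0 with a ≠ b and φ : [0,1] → [0,∞) integrable with ∫₀¹φ(t)dt over a set of positive measure where φ > 0, the quantity I_φ(a,b) = −∫₀¹φ(t)dt + ∫₀¹ √((φ(t)+a)(φ(t)+b)) dt is strictly greater than √(ab). -/
/-!
Pointwise, `(x + a)(x + b) = (x + √(ab))² + x (√a - √b)²`, so for `x ≥ 0` we get
`x + √(ab) ≤ √((x + a)(x + b))`, strictly when `x > 0` because `a ≠ b`. Integrating
`φ(t) + √(ab) ≤ √((φ(t) + a)(φ(t) + b))` over `[0, 1]` gives the claim, with strict inequality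
since the pointwise one is strict on the set `{φ > 0}` of positive measure.
-/

open MeasureTheory intervalIntegral

namespace Real

variable {a b : ℝ}

theorem add_mul_add_eq_sq_add_sqrt_mul_add (ha : 0 ≤ a) (hb : 0 ≤ b) (x : ℝ) :
    (x + a) * (x + b) = (x + √(a * b)) ^ 2 + x * (√a - √b) ^ 2 := by
  rw [sqrt_mul ha]
  linear_combination (-x - √b ^ 2) * sq_sqrt ha + (-x - a) * sq_sqrt hb

theorem add_sqrt_mul_le_sqrt_add_mul_add (ha : 0 ≤ a) (hb : 0 ≤ b) {x : ℝ} (hx : 0 ≤ x) :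
    x + √(a * b) ≤ √((x + a) * (x + b)) := by
  refine le_sqrt_of_sq_le ?_
  rw [add_mul_add_eq_sq_add_sqrt_mul_add ha hb]
  exact le_add_of_nonneg_right (mul_nonneg hx (sq_nonneg _))

theorem add_sqrt_mul_lt_sqrt_add_mul_add (ha : 0 ≤ a) (hb : 0 ≤ b) (hab : a ≠ b) {x : ℝ}
    (hx : 0 < x) : x + √(a * b) < √((x + a) * (x + b)) := by
  have hgap : 0 < (√a - √b) ^ 2 :=
    sq_pos_of_ne_zero (sub_ne_zero.2 fun h => hab ((sqrt_inj ha hb).1 h))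
  rw [lt_sqrt (by positivity), add_mul_add_eq_sq_add_sqrt_mul_add ha hb]
  exact lt_add_of_pos_right _ (mul_pos hx hgap)

theorem sqrt_add_mul_add_le_add_half (ha : 0 ≤ a) (hb : 0 ≤ b) {x : ℝ} (hx : 0 ≤ x) :
    √((x + a) * (x + b)) ≤ x + (a + b) / 2 := by
  rw [sqrt_le_left (by positivity)]
  nlinarith [sq_nonneg (a - b)]

end Real

theorem MeasureTheory.Integrable.sqrt_add_mul_add {α : Type*} [MeasurableSpace α] {μ : Measure α}
    [IsFiniteMeasure μ] {φ : α → ℝ} {a b : ℝ} (hφ : Integrable φ μ) (hφnn : 0 ≤ᵐ[μ] φ)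
    (ha : 0 ≤ a) (hb : 0 ≤ b) : Integrable (fun t => √((φ t + a) * (φ t + b))) μ := by
  refine (hφ.add (integrable_const ((a + b) / 2))).mono' ?_ ?_
  · have hφm := hφ.aemeasurable
    exact (((hφm.add_const a).mul (hφm.add_const b)).sqrt).aestronglyMeasurable
  · filter_upwards [hφnn] with t ht
    rw [Real.norm_of_nonneg (Real.sqrt_nonneg _)]
    exact Real.sqrt_add_mul_add_le_add_half ha hb ht

theorem I_phi_gt_G (a b : ℝ) (ha : 0 < a) (hb : 0 < b) (hab : a ≠ b)
    (φ : ℝ → ℝ)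
    (hφint : IntegrableOn φ (Set.Icc 0 1) volume)
    (hφnn : ∀ t ∈ Set.Icc (0:ℝ) 1, 0 ≤ φ t)
    (hφpos : 0 < volume {t ∈ Set.Icc (0:ℝ) 1 | 0 < φ t}) :
    Real.sqrt (a * b) <
      -(∫ t in (0:ℝ)..1, φ t) +
        ∫ t in (0:ℝ)..1, Real.sqrt ((φ t + a) * (φ t + b)) := by
  have hIcc : volume.restrict (Set.Ioc (0:ℝ) 1) = volume.restrict (Set.Icc 0 1) :=
    Measure.restrict_congr_set Ioc_ae_eq_Icc
  have hφnn' : 0 ≤ᵐ[volume.restrict (Set.Icc (0:ℝ) 1)] φ :=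
    (ae_restrict_iff' measurableSet_Icc).2 (ae_of_all _ hφnn)
  have hφi : IntervalIntegrable φ volume 0 1 :=
    (intervalIntegrable_iff_integrableOn_Icc_of_le zero_le_one).2 hφint
  have hFi : IntervalIntegrable (fun t => √((φ t + a) * (φ t + b))) volume 0 1 :=
    (intervalIntegrable_iff_integrableOn_Icc_of_le zero_le_one).2
      (hφint.sqrt_add_mul_add hφnn' ha.le hb.le)
  have hlt : ∫ t in (0:ℝ)..1, (φ t + √(a * b)) < ∫ t in (0:ℝ)..1, √((φ t + a) * (φ t + b)) :=
    integral_lt_integral_of_ae_le_of_measure_setOfPred_lt_ne_zero zero_le_one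
      (hφi.add intervalIntegrable_const) hFi ?_ ?_
  · rw [integral_add hφi intervalIntegrable_const, intervalIntegral.integral_const] at hlt
    simp only [sub_zero, one_smul] at hlt
    linarith
  · rw [hIcc]
    filter_upwards [hφnn'] with t ht
    exact Real.add_sqrt_mul_le_sqrt_add_mul_add ha.le hb.le ht
  · rw [hIcc, Measure.restrict_apply' measurableSet_Icc]
    refine (hφpos.trans_le (measure_mono ?_)).ne'
    rintro t ⟨htI, htφ⟩
    exact ⟨Real.add_sqrt_mul_lt_sqrt_add_mul_add ha.le hb.le hab htφ, htI⟩
end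

section
/- Let M be a mean function. Then for all a, b > 0, 2·A(a,b) − √(a²+b²) ≤ ∫₀^{π/2} M(a·sin θ, b·cos θ) dθ ≤ √(a²+b²), where A(a,b) = (a+b)/2. -/
open MeasureTheory intervalIntegral Real

/-!
Pointwise `min ≤ M ≤ max`, so it suffices to integrate `max` and `min` of `a sin θ` and
`b cos θ` exactly. Writing `a = c cos θ₀`, `b = c sin θ₀` with `c = √(a² + b²)`,
`θ₀ = arctan (b / a)`, one has `a sin θ - b cos θ = c sin (θ - θ₀)`, so the two curves cross
only at `θ₀`, and splitting there gives `∫ max = b sin θ₀ + a cos θ₀ = c`. Since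
`min + max = a sin θ + b cos θ` integrates to `a + b`, also `∫ min = a + b - c`.
-/

lemma integral_max_eq_of_le_of_le {f g : ℝ → ℝ} {u t w : ℝ} (hf : Continuous f)
    (hg : Continuous g) (hut : u ≤ t) (htw : t ≤ w) (hfg : ∀ x ∈ Set.Icc u t, f x ≤ g x)
    (hgf : ∀ x ∈ Set.Icc t w, g x ≤ f x) :
    ∫ x in u..w, max (f x) (g x) = (∫ x in u..t, g x) + ∫ x in t..w, f x := by
  rw [← integral_add_adjacent_intervals ((hf.max hg).intervalIntegrable _ _)
    ((hf.max hg).intervalIntegrable _ _)]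
  congr 1 <;> refine integral_congr fun x hx => ?_
  · rw [Set.uIcc_of_le hut] at hx
    exact max_eq_right (hfg x hx)
  · rw [Set.uIcc_of_le htw] at hx
    exact max_eq_left (hgf x hx)

section Polar

variable {a : ℝ} (b : ℝ)

lemma sqrt_one_add_div_sq (ha : 0 < a) : √(1 + (b / a) ^ 2) = √(a ^ 2 + b ^ 2) / a := by
  rw [div_pow, one_add_div (by positivity), sqrt_div' _ (by positivity), sqrt_sq ha.le]

lemma sqrt_sq_add_sq_mul_cos_arctan_div (ha : 0 < a) :
    √(a ^ 2 + b ^ 2) * cos (arctan (b / a)) = a := by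
  have hc : 0 < √(a ^ 2 + b ^ 2) := sqrt_pos.mpr (by positivity)
  rw [cos_arctan, sqrt_one_add_div_sq b ha]
  field_simp

lemma sqrt_sq_add_sq_mul_sin_arctan_div (ha : 0 < a) :
    √(a ^ 2 + b ^ 2) * sin (arctan (b / a)) = b := by
  have hc : 0 < √(a ^ 2 + b ^ 2) := sqrt_pos.mpr (by positivity)
  rw [sin_arctan, sqrt_one_add_div_sq b ha]
  field_simp

lemma mul_sin_sub_mul_cos_eq (ha : 0 < a) (θ : ℝ) :
    a * sin θ - b * cos θ = √(a ^ 2 + b ^ 2) * sin (θ - arctan (b / a)) := by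
  rw [sin_sub]
  linear_combination -(sin θ) * sqrt_sq_add_sq_mul_cos_arctan_div b ha +
    cos θ * sqrt_sq_add_sq_mul_sin_arctan_div b ha

lemma mul_sin_le_mul_cos_of_mem_Icc (ha : 0 < a) {θ : ℝ}
    (hθ : θ ∈ Set.Icc 0 (arctan (b / a))) : a * sin θ ≤ b * cos θ := by
  have hsin : sin (θ - arctan (b / a)) ≤ 0 :=
    sin_nonpos_of_nonpos_of_neg_pi_le (by linarith [hθ.2])
      (by linarith [hθ.1, arctan_lt_pi_div_two (b / a), pi_pos])
  have hc : 0 ≤ √(a ^ 2 + b ^ 2) := sqrt_nonneg _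
  nlinarith [mul_sin_sub_mul_cos_eq b ha θ]

lemma mul_cos_le_mul_sin_of_mem_Icc (ha : 0 < a) {θ : ℝ}
    (hθ : θ ∈ Set.Icc (arctan (b / a)) (π / 2)) : b * cos θ ≤ a * sin θ := by
  have hsin : 0 ≤ sin (θ - arctan (b / a)) :=
    sin_nonneg_of_nonneg_of_le_pi (by linarith [hθ.1])
      (by linarith [hθ.2, neg_pi_div_two_lt_arctan (b / a)])
  have hc : 0 ≤ √(a ^ 2 + b ^ 2) := sqrt_nonneg _
  nlinarith [mul_sin_sub_mul_cos_eq b ha θ]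

end Polar

section Integrals

variable {a b : ℝ}

lemma integral_max_mul_sin_mul_cos (ha : 0 < a) (hb : 0 < b) :
    ∫ θ in (0 : ℝ)..π / 2, max (a * sin θ) (b * cos θ) = √(a ^ 2 + b ^ 2) := by
  have hθ₀ : 0 ≤ arctan (b / a) := arctan_nonneg.mpr (by positivity)
  rw [integral_max_eq_of_le_of_le (f := fun θ => a * sin θ) (g := fun θ => b * cos θ)
      (continuous_const.mul continuous_sin) (continuous_const.mul continuous_cos) hθ₀ (arctan_lt_pi_div_two _).le
      (fun θ hθ => mul_sin_le_mul_cos_of_mem_Icc b ha hθ)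
      (fun θ hθ => mul_cos_le_mul_sin_of_mem_Icc b ha hθ),
    intervalIntegral.integral_const_mul, intervalIntegral.integral_const_mul, integral_cos, integral_sin, sin_zero,
    cos_pi_div_two]
  linear_combination -(sin (arctan (b / a))) * sqrt_sq_add_sq_mul_sin_arctan_div b ha -
    cos (arctan (b / a)) * sqrt_sq_add_sq_mul_cos_arctan_div b ha +
    √(a ^ 2 + b ^ 2) * sin_sq_add_cos_sq (arctan (b / a))

lemma integral_min_mul_sin_mul_cos (ha : 0 < a) (hb : 0 < b) :
    ∫ θ in (0 : ℝ)..π / 2, min (a * sin θ) (b * cos θ) = a + b - √(a ^ 2 + b ^ 2) := by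
  have hf : Continuous fun θ => a * sin θ := continuous_const.mul continuous_sin
  have hg : Continuous fun θ => b * cos θ := continuous_const.mul continuous_cos
  have hsum : (∫ θ in (0 : ℝ)..π / 2, min (a * sin θ) (b * cos θ)) +
      ∫ θ in (0 : ℝ)..π / 2, max (a * sin θ) (b * cos θ) = a + b := by
    rw [← integral_add ((hf.min hg).intervalIntegrable _ _) ((hf.max hg).intervalIntegrable _ _)]
    simp only [min_add_max]
    rw [integral_add (hf.intervalIntegrable _ _) (hg.intervalIntegrable _ _), intervalIntegral.integral_const_mul,
      intervalIntegral.integral_const_mul, integral_sin, integral_cos, cos_zero, cos_pi_div_two, sin_zero,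
      sin_pi_div_two]
    ring
  rw [integral_max_mul_sin_mul_cos ha hb] at hsum
  linarith

end Integrals

theorem Shat_bounds_general (M : ℝ → ℝ → ℝ)
    (hMmean : ∀ x y : ℝ, 0 < x → 0 < y → min x y ≤ M x y ∧ M x y ≤ max x y)
    (a b : ℝ) (ha : 0 < a) (hb : 0 < b)
    (hint : IntervalIntegrable (fun θ => M (a * Real.sin θ) (b * Real.cos θ))
      volume 0 (Real.pi / 2)) :
    2 * ((a + b) / 2) - Real.sqrt (a^2 + b^2) ≤
      (∫ θ in (0:ℝ)..(Real.pi / 2), M (a * Real.sin θ) (b * Real.cos θ)) ∧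
    (∫ θ in (0:ℝ)..(Real.pi / 2), M (a * Real.sin θ) (b * Real.cos θ)) ≤
      Real.sqrt (a^2 + b^2) := by
  have hf : Continuous fun θ => a * sin θ := continuous_const.mul continuous_sin
  have hg : Continuous fun θ => b * cos θ := continuous_const.mul continuous_cos
  have hM : ∀ θ ∈ Set.Ioo 0 (π / 2), min (a * sin θ) (b * cos θ) ≤ M (a * sin θ) (b * cos θ) ∧
      M (a * sin θ) (b * cos θ) ≤ max (a * sin θ) (b * cos θ) := fun θ hθ =>
    hMmean _ _ (mul_pos ha (sin_pos_of_pos_of_lt_pi hθ.1 (by linarith [hθ.2, pi_pos])))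
      (mul_pos hb (cos_pos_of_mem_Ioo ⟨by linarith [hθ.1, pi_pos], hθ.2⟩))
  have hπ : (0 : ℝ) ≤ π / 2 := by positivity
  constructor
  · calc 2 * ((a + b) / 2) - √(a ^ 2 + b ^ 2)
        = ∫ θ in (0 : ℝ)..π / 2, min (a * sin θ) (b * cos θ) := by
          rw [integral_min_mul_sin_mul_cos ha hb]; ring
      _ ≤ _ := integral_mono_on_of_le_Ioo hπ ((hf.min hg).intervalIntegrable _ _) hint
          fun θ hθ => (hM θ hθ).1
  · calc _ ≤ ∫ θ in (0 : ℝ)..π / 2, max (a * sin θ) (b * cos θ) :=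
          integral_mono_on_of_le_Ioo hπ hint ((hf.max hg).intervalIntegrable _ _)
            fun θ hθ => (hM θ hθ).2
      _ = _ := integral_max_mul_sin_mul_cos ha hb

theorem Shat_bounds (M : ℝ → ℝ → ℝ)
    (hMmean : ∀ x y : ℝ, 0 < x → 0 < y → min x y ≤ M x y ∧ M x y ≤ max x y)
    (hMsymm : ∀ x y : ℝ, 0 < x → 0 < y → M x y = M y x)
    (a b : ℝ) (ha : 0 < a) (hb : 0 < b)
    (hint : IntervalIntegrable (fun θ => M (a * Real.sin θ) (b * Real.cos θ))
      volume 0 (Real.pi / 2)) :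
    2 * ((a + b) / 2) - Real.sqrt (a^2 + b^2) ≤
      (∫ θ in (0:ℝ)..(Real.pi / 2), M (a * Real.sin θ) (b * Real.cos θ)) ∧
    (∫ θ in (0:ℝ)..(Real.pi / 2), M (a * Real.sin θ) (b * Real.cos θ)) ≤
      Real.sqrt (a^2 + b^2) :=
  Shat_bounds_general M hMmean a b ha hb hint
end
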